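/- arXiv:1912.13367 — 9 statements merged into one kernel-verified Lean document; each statement's English description precedes it below -/
import Mathlib

section
/- Let C ⊆ 𝔤 be an invariant cone. Then C ⊆ C₊ ⊕ 𝔤⁰ ⊕ (−C₋); that is, if x ∈ C is written x = x₋₁ + x₀ + x₁ with xⱼ ∈ 𝔤ʲ, then x₁ ∈ C₊ = C ∩ 𝔤¹ and x₋₁ ∈ C ∩ 𝔤⁻¹ = −C₋. -/
/-!
Conjugating by `e^{ad (t h)}` rescales the graded components of `x = a + b + c ∈ C` to
`e^{-t} a + b + e^{t} c ∈ C`. Multiplying by `e^{-t}` and letting `t → ∞` (resp. multiplying by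
`e^{t}` and letting `t → -∞`) isolates `c` (resp. `a`) as a limit of points of the closed cone `C`.
-/

/-- The exponential `e^{ad y}` of the endomorphism `ad y` of a topological Lie algebra,
defined by the exponential series. -/
noncomputable def expAd {L : Type*} [LieRing L] [LieAlgebra ℝ L] [TopologicalSpace L]
    (y : L) (x : L) : L :=
  ∑' n : ℕ, ((n.factorial : ℝ)⁻¹) • ((LieAlgebra.ad ℝ L y ^ n) x)

section Eigenvector

variable {L : Type*} [LieRing L] [LieAlgebra ℝ L] {h v : L} {l : ℝ}

lemma ad_smul_pow_apply_of_lie_eq_smul (hv : ⁅h, v⁆ = l • v) (t : ℝ) (n : ℕ) :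
    (LieAlgebra.ad ℝ L (t • h) ^ n) v = (t * l) ^ n • v := by
  induction n with
  | zero => simp
  | succ n ih =>
    rw [pow_succ', Module.End.mul_apply, ih, map_smul, LieAlgebra.ad_apply, smul_lie, hv,
      smul_smul, smul_smul, pow_succ, mul_assoc]

lemma hasSum_expAd_series_of_lie_eq_smul [TopologicalSpace L] [ContinuousSMul ℝ L]
    (hv : ⁅h, v⁆ = l • v) (t : ℝ) :
    HasSum (fun n : ℕ => ((n.factorial : ℝ)⁻¹) • ((LieAlgebra.ad ℝ L (t • h) ^ n) v))
      (Real.exp (t * l) • v) := by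
  have hexp := NormedSpace.expSeries_div_hasSum_exp (t * l)
  rw [← Real.exp_eq_exp_ℝ] at hexp
  convert hexp.smul_const v using 2 with n
  rw [ad_smul_pow_apply_of_lie_eq_smul hv, smul_smul, div_eq_inv_mul]

end Eigenvector

lemma expAd_smul_apply_of_graded {L : Type*} [LieRing L] [LieAlgebra ℝ L] [TopologicalSpace L]
    [ContinuousAdd L] [ContinuousSMul ℝ L] [T2Space L] {h a b c : L}
    (ha : ⁅h, a⁆ = -a) (hb : ⁅h, b⁆ = 0) (hc : ⁅h, c⁆ = c) (t : ℝ) :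
    expAd (t • h) (a + b + c) = Real.exp (-t) • a + b + Real.exp t • c := by
  have hsum := ((hasSum_expAd_series_of_lie_eq_smul (l := -1) (by simpa using ha) t).add
    (hasSum_expAd_series_of_lie_eq_smul (l := 0) (by simpa using hb) t)).add
    (hasSum_expAd_series_of_lie_eq_smul (l := 1) (by simpa using hc) t)
  simp only [← smul_add, ← map_add, mul_neg_one, mul_zero, mul_one, Real.exp_zero,
    one_smul] at hsum
  exact hsum.tsum_eq

lemma IsClosed.mem_of_forall_pos_smul_add_add_inv_smul_mem {E : Type*} [AddCommGroup E]
    [Module ℝ E] [TopologicalSpace E] [ContinuousAdd E] [ContinuousSMul ℝ E] {C : Set E}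
    (hC : IsClosed C) (hcone : ∀ r : ℝ, 0 ≤ r → ∀ x ∈ C, r • x ∈ C) {a b c : E}
    (hmem : ∀ ε : ℝ, 0 < ε → ε • a + b + ε⁻¹ • c ∈ C) : c ∈ C := by
  set f : ℝ → E := fun ε => (ε * ε) • a + ε • b + c
  have hf : Continuous f := by fun_prop
  have hlim : Filter.Tendsto f (nhdsWithin 0 (Set.Ioi 0)) (nhds c) := by
    simpa [f] using hf.continuousWithinAt.tendsto (s := Set.Ioi 0) (x := 0)
  refine hC.mem_of_tendsto hlim ?_
  filter_upwards [self_mem_nhdsWithin] with ε (hε : 0 < ε)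
  convert hcone ε hε.le _ (hmem ε hε) using 1
  rw [smul_add, smul_add, smul_smul, smul_smul, mul_inv_cancel₀ hε.ne', one_smul]

theorem statement0_general {L : Type*} [LieRing L] [LieAlgebra ℝ L]
    [TopologicalSpace L] [IsTopologicalAddGroup L] [ContinuousSMul ℝ L] [T2Space L]
    (h : L)
    (C : Set L) (hCcl : IsClosed C)
    (hCcone : ∀ r : ℝ, 0 ≤ r → ∀ x ∈ C, r • x ∈ C)
    (hCinv : ∀ y : L, expAd y '' C = C)
    {x a b c : L} (hx : x ∈ C)
    (ha : ⁅h, a⁆ = -a) (hb : ⁅h, b⁆ = 0) (hc : ⁅h, c⁆ = c)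
    (hxabc : x = a + b + c) :
    c ∈ C ∧ a ∈ C := by
  have hmem : ∀ s : ℝ, 0 < s → s⁻¹ • a + b + s • c ∈ C := fun s hs => by
    have hconj : expAd (Real.log s • h) x ∈ C := hCinv _ ▸ Set.mem_image_of_mem _ hx
    rwa [hxabc, expAd_smul_apply_of_graded ha hb hc, Real.exp_neg, Real.exp_log hs] at hconj
  constructor
  · refine hCcl.mem_of_forall_pos_smul_add_add_inv_smul_mem hCcone (a := a) (b := b) fun ε hε => ?_
    simpa using hmem ε⁻¹ (inv_pos.2 hε)
  · refine hCcl.mem_of_forall_pos_smul_add_add_inv_smul_mem hCcone (a := c) (b := b) fun ε hε => ?_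
    convert hmem ε hε using 1
    abel

/-- if `𝔤` is 3-graded by `ad h` and `C` is an invariant cone, then
`C ⊆ C₊ ⊕ 𝔤⁰ ⊕ (−C₋)`: whenever `x ∈ C` is written `x = a + b + c` with graded
components `a ∈ 𝔤⁻¹`, `b ∈ 𝔤⁰`, `c ∈ 𝔤¹`, then `c ∈ C ∩ 𝔤¹ = C₊` and
`a ∈ C ∩ 𝔤⁻¹ = −C₋`. -/
theorem statement0 {L : Type*} [LieRing L] [LieAlgebra ℝ L]
    [TopologicalSpace L] [IsTopologicalAddGroup L] [ContinuousSMul ℝ L] [T2Space L]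
    [FiniteDimensional ℝ L]
    (h : L)
    (hgrad : ∀ x : L, ∃ a b c : L,
      ⁅h, a⁆ = -a ∧ ⁅h, b⁆ = 0 ∧ ⁅h, c⁆ = c ∧ x = a + b + c)
    (C : Set L) (hCcl : IsClosed C) (hCcv : Convex ℝ C)
    (hCcone : ∀ r : ℝ, 0 ≤ r → ∀ x ∈ C, r • x ∈ C)
    (hCinv : ∀ y : L, expAd y '' C = C)
    {x a b c : L} (hx : x ∈ C)
    (ha : ⁅h, a⁆ = -a) (hb : ⁅h, b⁆ = 0) (hc : ⁅h, c⁆ = c)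
    (hxabc : x = a + b + c) :
    c ∈ C ∧ a ∈ C :=
  statement0_general h C hCcl hCcone hCinv hx ha hb hc hxabc
end

section
/- Let C ⊆ 𝔤 be a pointed invariant cone with τ(C) = −C. Then {x ∈ 𝔤 : h − e^{t·ad x}(h) ∈ C for all t ≥ 0} = C₊ + 𝔤⁰ + C₋. (This computes the Lie wedge L(S(h,C)) of the closed subsemigroup S(h,C) = {g : Ad(g)h ∈ h − C}: it equals C₊ ⊕ 𝔤⁰ ⊕ C₋.) -/
/-!
For a closed convex cone `C` invariant under every `e^{ad y}`, the condition
`h - e^{t ad x} h ∈ C` for all `t ≥ 0` is equivalent to `⁅h, x⁆ ∈ C`: differentiating at `t = 0`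
gives one direction, and conversely `h - e^{t ad x} h = ∫₀ᵗ e^{s ad x} ⁅h, x⁆ ds` is an integral
of points of `C`. Writing `x = a + b + c` along the grading, `⁅h, x⁆ = c - a`, and invariance
gives `e^{s ad h} (c - a) = eˢ c - e⁻ˢ a ∈ C` for every real `s`; rescaling by `e⁻ˢ` (resp. `eˢ`)
and letting `s → ∞` (resp. `s → -∞`) yields `c ∈ C` and `-a ∈ C`.
-/

open NormedSpace Module Filter Topology MeasureTheory
open scoped Nat

section Cone

variable {M : Type*} [AddCommGroup M] [Module ℝ M] {K : Set M}

lemma add_mem_of_convex_of_smul_mem (hKcv : Convex ℝ K)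
    (hK : ∀ r : ℝ, 0 ≤ r → ∀ x ∈ K, r • x ∈ K) {u v : M} (hu : u ∈ K) (hv : v ∈ K) :
    u + v ∈ K := by
  have hmid := hKcv hu hv (by norm_num : (0 : ℝ) ≤ 1 / 2) (by norm_num : (0 : ℝ) ≤ 1 / 2)
    (by norm_num)
  convert hK 2 zero_le_two _ hmid using 1
  module

variable [TopologicalSpace M] [IsTopologicalAddGroup M] [ContinuousSMul ℝ M]

lemma mem_of_forall_exp_smul_add_exp_neg_smul_mem (hKcl : IsClosed K)
    (hK : ∀ r : ℝ, 0 ≤ r → ∀ x ∈ K, r • x ∈ K) {c d : M}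
    (hcd : ∀ s : ℝ, Real.exp s • c + Real.exp (-s) • d ∈ K) : c ∈ K := by
  have hmem : ∀ s : ℝ, c + (Real.exp (-s) * Real.exp (-s)) • d ∈ K := fun s => by
    convert hK _ (Real.exp_nonneg (-s)) _ (hcd s) using 1
    rw [smul_add, smul_smul, smul_smul, ← Real.exp_add (-s) s, neg_add_cancel, Real.exp_zero,
      one_smul]
  have hlim : Tendsto (fun s : ℝ => c + (Real.exp (-s) * Real.exp (-s)) • d) atTop (𝓝 c) := by
    have h0 := Real.tendsto_exp_neg_atTop_nhds_zero
    simpa using tendsto_const_nhds.add ((h0.mul h0).smul_const d)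
  exact hKcl.mem_of_tendsto hlim (Eventually.of_forall hmem)

end Cone

section Flow

variable {E : Type*} [NormedAddCommGroup E] [NormedSpace ℝ E] [CompleteSpace E] {K : Set E}

lemma intervalIntegral_mem_of_convex_cone (hKcl : IsClosed K) (hKcv : Convex ℝ K)
    (hK : ∀ r : ℝ, 0 ≤ r → ∀ x ∈ K, r • x ∈ K) {f : ℝ → E} (hf : Continuous f)
    (hfK : ∀ s, f s ∈ K) {t : ℝ} (ht : 0 ≤ t) : ∫ s in 0..t, f s ∈ K := by
  rcases ht.eq_or_lt with rfl | htpos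
  · simpa using hK 0 le_rfl _ (hfK 0)
  have hvol : volume (Set.Ioc 0 t) ≠ 0 := by simp [htpos]
  have havg := hKcv.set_average_mem hKcl hvol (by simp) (Eventually.of_forall hfK)
    hf.integrableOn_Ioc
  rw [intervalIntegral.integral_of_le ht]
  convert hK t ht _ havg using 1
  rw [setAverage_eq, Real.volume_real_Ioc_of_le ht, sub_zero, smul_smul,
    mul_inv_cancel₀ htpos.ne', one_smul]

lemma hasDerivAt_exp_smul_apply (A : E →L[ℝ] E) (v : E) (t : ℝ) :
    HasDerivAt (fun s : ℝ => exp (s • A) v) (exp (t • A) (A v)) t := by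
  simpa using (hasDerivAt_exp_smul_const A t).clm_apply (hasDerivAt_const t v)

lemma neg_apply_mem_of_forall_sub_exp_smul_apply_mem (hKcl : IsClosed K)
    (hK : ∀ r : ℝ, 0 ≤ r → ∀ x ∈ K, r • x ∈ K) (A : E →L[ℝ] E) (v : E)
    (hv : ∀ t : ℝ, 0 ≤ t → v - exp (t • A) v ∈ K) : -A v ∈ K := by
  have hslope := hasDerivAt_iff_tendsto_slope.mp (hasDerivAt_exp_smul_apply A v 0)
  simp only [zero_smul, exp_zero, one_apply_eq_self] at hslope
  have hlim : Tendsto (fun t : ℝ => t⁻¹ • (v - exp (t • A) v)) (𝓝[>] 0) (𝓝 (-A v)) := by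
    refine (hslope.mono_left (nhdsWithin_mono 0 fun t ht => ne_of_gt ht)).neg.congr fun t => ?_
    simp only [slope_def_module, sub_zero, zero_smul, exp_zero, one_apply_eq_self]
    rw [← smul_neg, neg_sub]
  refine hKcl.mem_of_tendsto hlim ?_
  filter_upwards [self_mem_nhdsWithin] with t ht
  exact hK _ (inv_nonneg.mpr (le_of_lt ht)) _ (hv t (le_of_lt ht))

lemma sub_exp_smul_apply_mem_of_neg_apply_mem (hKcl : IsClosed K)
    (hKcv : Convex ℝ K) (hK : ∀ r : ℝ, 0 ≤ r → ∀ x ∈ K, r • x ∈ K) (A : E →L[ℝ] E)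
    (hAK : ∀ s : ℝ, Set.MapsTo ⇑(exp (s • A)) K K) {v : E} (hv : -A v ∈ K) {t : ℝ}
    (ht : 0 ≤ t) : v - exp (t • A) v ∈ K := by
  have hderiv : ∀ s, HasDerivAt (fun s : ℝ => v - exp (s • A) v) (exp (s • A) (-A v)) s :=
    fun s => by simpa using (hasDerivAt_exp_smul_apply A v s).const_sub v
  have hcont : Continuous fun s : ℝ => exp (s • A) (-A v) :=
    continuous_iff_continuousAt.2 fun s => (hasDerivAt_exp_smul_apply A (-A v) s).continuousAt
  have hftc := intervalIntegral.integral_eq_sub_of_hasDerivAt (fun s _ => hderiv s)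
    (hcont.intervalIntegrable 0 t)
  simp only [zero_smul, exp_zero, one_apply_eq_self, sub_self, sub_zero] at hftc
  rw [← hftc]
  exact intervalIntegral_mem_of_convex_cone hKcl hKcv hK hcont (fun s => hAK s hv) ht

end Flow

lemma hasSum_pow_apply_of_apply_eq_smul {M : Type*} [AddCommGroup M] [Module ℝ M]
    [TopologicalSpace M] [ContinuousSMul ℝ M] (T : Module.End ℝ M) {u : M} {r : ℝ}
    (hu : T u = r • u) : HasSum (fun n : ℕ => (n !⁻¹ : ℝ) • (T ^ n) u) (Real.exp r • u) := by
  have hpow : ∀ n : ℕ, (T ^ n) u = r ^ n • u := fun n => by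
    induction n with
    | zero => simp
    | succ n ih => rw [pow_succ', Module.End.mul_apply, ih, map_smul, hu, smul_smul, pow_succ]
  simp only [hpow, smul_smul]
  rw [Real.exp_eq_exp_ℝ]
  exact (exp_series_hasSum_exp' (𝕂 := ℝ) r).smul_const u

section EuclideanModel

variable {V : Type*} [AddCommGroup V] [Module ℝ V] [TopologicalSpace V]
  [IsTopologicalAddGroup V] [ContinuousSMul ℝ V] [T2Space V] [FiniteDimensional ℝ V]

local notation "E" => EuclideanSpace ℝ (Fin (finrank ℝ V))

/-- Endomorphisms of `V` as operators on a Euclidean model of `V`, where `NormedSpace.exp`,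
derivatives and Bochner integrals are available. -/
noncomputable def endToEuclidean : Module.End ℝ V ≃ₐ[ℝ] (E →L[ℝ] E) :=
  ((toEuclidean : V ≃L[ℝ] E).toLinearEquiv.conjAlgEquiv ℝ).trans
    (Module.End.toContinuousLinearMap E)

lemma endToEuclidean_apply (T : Module.End ℝ V) (v : V) :
    endToEuclidean T (toEuclidean v) = toEuclidean (T v) := by
  change toEuclidean (T (toEuclidean.symm (toEuclidean v))) = _
  simp

lemma hasSum_pow_apply_exp_endToEuclidean (T : Module.End ℝ V) (v : V) :
    HasSum (fun n : ℕ => (n !⁻¹ : ℝ) • (T ^ n) v)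
      (toEuclidean.symm (exp (endToEuclidean T) (toEuclidean v))) := by
  let ev : (E →L[ℝ] E) →L[ℝ] V := (toEuclidean : V ≃L[ℝ] E).symm.toContinuousLinearMap.comp
    (ContinuousLinearMap.apply ℝ E (toEuclidean v))
  convert (exp_series_hasSum_exp' (𝕂 := ℝ) (endToEuclidean T)).mapL ev using 2 with n
  · simp [ev, ← map_pow, endToEuclidean_apply]
  · rfl

end EuclideanModel

section LieAlgebra

variable {L : Type*} [LieRing L] [LieAlgebra ℝ L] [TopologicalSpace L] [IsTopologicalAddGroup L]
  [ContinuousSMul ℝ L] [T2Space L]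

lemma expAd_smul_add_of_eigen (h : L) (s : ℝ) {c d : L} (hc : ⁅h, c⁆ = c) (hd : ⁅h, d⁆ = -d) :
    expAd (s • h) (c + d) = Real.exp s • c + Real.exp (-s) • d := by
  have hc' : LieAlgebra.ad ℝ L (s • h) c = s • c := by simp [hc]
  have hd' : LieAlgebra.ad ℝ L (s • h) d = (-s) • d := by simp [hd]
  unfold expAd
  simp only [map_add, smul_add]
  exact ((hasSum_pow_apply_of_apply_eq_smul _ hc').add
    (hasSum_pow_apply_of_apply_eq_smul _ hd')).tsum_eq

lemma expAd_eq [FiniteDimensional ℝ L] (y x : L) :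
    expAd y x =
      toEuclidean.symm (exp (endToEuclidean (LieAlgebra.ad ℝ L y)) (toEuclidean x)) :=
  (hasSum_pow_apply_exp_endToEuclidean _ _).tsum_eq

variable {C : Set L} (hCcl : IsClosed C) (hCcv : Convex ℝ C)
  (hCcone : ∀ r : ℝ, 0 ≤ r → ∀ x ∈ C, r • x ∈ C) (hCinv : ∀ y : L, Set.MapsTo (expAd y) C C)
include hCcl hCcv hCcone hCinv

lemma forall_sub_expAd_mem_iff_lie_mem [FiniteDimensional ℝ L] (h x : L) :
    (∀ t : ℝ, 0 ≤ t → h - expAd (t • x) h ∈ C) ↔ ⁅h, x⁆ ∈ C := by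
  set e : L ≃L[ℝ] EuclideanSpace ℝ (Fin (finrank ℝ L)) := toEuclidean
  set A := endToEuclidean (LieAlgebra.ad ℝ L x)
  set K := e.symm ⁻¹' C
  have hflow : ∀ t : ℝ, h - expAd (t • x) h = e.symm (e h - exp (t • A) (e h)) := fun t => by
    rw [expAd_eq, map_smul, map_smul, map_sub, e.symm_apply_apply]
  have hAh : -A (e h) = e ⁅h, x⁆ := by
    rw [endToEuclidean_apply, LieAlgebra.ad_apply, ← map_neg, lie_skew]
  have hKcl : IsClosed K := hCcl.preimage e.symm.continuous
  have hKcv : Convex ℝ K := hCcv.linear_preimage e.symm.toLinearMap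
  have hK : ∀ r : ℝ, 0 ≤ r → ∀ k ∈ K, r • k ∈ K := fun r hr k hk => by
    simpa [K] using hCcone r hr _ hk
  have hAK : ∀ s : ℝ, Set.MapsTo ⇑(exp (s • A)) K K := fun s k hk => by
    have := hCinv (s • x) hk
    rwa [expAd_eq, e.apply_symm_apply, map_smul, map_smul] at this
  simp only [hflow]
  constructor
  · intro hx
    have := neg_apply_mem_of_forall_sub_exp_smul_apply_mem hKcl hK A (e h) hx
    rwa [hAh, Set.mem_preimage, e.symm_apply_apply] at this
  · intro hx t ht
    refine sub_exp_smul_apply_mem_of_neg_apply_mem hKcl hKcv hK A hAK ?_ ht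
    rwa [hAh, Set.mem_preimage, e.symm_apply_apply]

lemma lie_add_add_mem_iff (h : L) {a b c : L} (ha : ⁅h, a⁆ = -a)
    (hb : ⁅h, b⁆ = 0) (hc : ⁅h, c⁆ = c) : ⁅h, a + b + c⁆ ∈ C ↔ -a ∈ C ∧ c ∈ C := by
  have hbr : ⁅h, a + b + c⁆ = c + -a := by
    rw [lie_add, lie_add, ha, hb, hc]
    abel
  rw [hbr]
  refine ⟨fun hmem => ?_, fun ⟨haC, hcC⟩ => add_mem_of_convex_of_smul_mem hCcv hCcone hcC haC⟩
  have hflow : ∀ s : ℝ, Real.exp s • c + Real.exp (-s) • -a ∈ C := fun s => by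
    rw [← expAd_smul_add_of_eigen h s hc (by rw [lie_neg, ha])]
    exact hCinv _ hmem
  refine ⟨mem_of_forall_exp_smul_add_exp_neg_smul_mem hCcl hCcone (d := c) fun s => ?_,
    mem_of_forall_exp_smul_add_exp_neg_smul_mem hCcl hCcone hflow⟩
  simpa [add_comm] using hflow (-s)

end LieAlgebra

theorem statement2_general {L : Type*} [LieRing L] [LieAlgebra ℝ L]
    [TopologicalSpace L] [IsTopologicalAddGroup L] [ContinuousSMul ℝ L] [T2Space L]
    [FiniteDimensional ℝ L]
    (h : L)
    (hgrad : ∀ x : L, ∃ a b c : L,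
      ⁅h, a⁆ = -a ∧ ⁅h, b⁆ = 0 ∧ ⁅h, c⁆ = c ∧ x = a + b + c)
    (C : Set L) (hCcl : IsClosed C) (hCcv : Convex ℝ C)
    (hCcone : ∀ r : ℝ, 0 ≤ r → ∀ x ∈ C, r • x ∈ C)
    (hCinv : ∀ y : L, expAd y '' C = C) :
    {x : L | ∀ t : ℝ, 0 ≤ t → h - expAd (t • x) h ∈ C} =
      {x : L | ∃ a b c : L, ⁅h, a⁆ = -a ∧ -a ∈ C ∧ ⁅h, b⁆ = 0 ∧
        ⁅h, c⁆ = c ∧ c ∈ C ∧ x = a + b + c} := by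
  have hCmaps : ∀ y : L, Set.MapsTo (expAd y) C C := fun y =>
    Set.mapsTo_iff_image_subset.2 (hCinv y).subset
  ext x
  rw [Set.mem_ofPred_eq, forall_sub_expAd_mem_iff_lie_mem hCcl hCcv hCcone hCmaps]
  constructor
  · intro hx
    obtain ⟨a, b, c, ha, hb, hc, rfl⟩ := hgrad x
    obtain ⟨haC, hcC⟩ := (lie_add_add_mem_iff hCcl hCcv hCcone hCmaps h ha hb hc).1 hx
    exact ⟨a, b, c, ha, haC, hb, hc, hcC, rfl⟩
  · rintro ⟨a, b, c, ha, haC, hb, hc, hcC, rfl⟩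
    exact (lie_add_add_mem_iff hCcl hCcv hCcone hCmaps h ha hb hc).2 ⟨haC, hcC⟩

/-- if `𝔤` is 3-graded by `ad h`, `τ = e^{πi ad h}` (the linear involution
which is the identity on `𝔤⁰` and `−id` on `𝔤¹ ⊕ 𝔤⁻¹`) and `C` is a pointed invariant
cone with `τ(C) = −C`, then
`{x ∈ 𝔤 : h − e^{t·ad x}(h) ∈ C for all t ≥ 0} = C₊ + 𝔤⁰ + C₋`, i.e. the Lie wedge of
`S(h,C)` is `C₊ ⊕ 𝔤⁰ ⊕ C₋`. -/
theorem statement2 {L : Type*} [LieRing L] [LieAlgebra ℝ L]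
    [TopologicalSpace L] [IsTopologicalAddGroup L] [ContinuousSMul ℝ L] [T2Space L]
    [FiniteDimensional ℝ L]
    (h : L)
    (hgrad : ∀ x : L, ∃ a b c : L,
      ⁅h, a⁆ = -a ∧ ⁅h, b⁆ = 0 ∧ ⁅h, c⁆ = c ∧ x = a + b + c)
    (C : Set L) (hCcl : IsClosed C) (hCcv : Convex ℝ C)
    (hCcone : ∀ r : ℝ, 0 ≤ r → ∀ x ∈ C, r • x ∈ C)
    (hCinv : ∀ y : L, expAd y '' C = C)
    (hCpt : C ∩ (-C) = {0})
    (τ : L →ₗ[ℝ] L)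
    (hτ0 : ∀ b : L, ⁅h, b⁆ = 0 → τ b = b)
    (hτ1 : ∀ c : L, ⁅h, c⁆ = c → τ c = -c)
    (hτm : ∀ a : L, ⁅h, a⁆ = -a → τ a = -a)
    (hτC : τ '' C = -C) :
    {x : L | ∀ t : ℝ, 0 ≤ t → h - expAd (t • x) h ∈ C} =
      {x : L | ∃ a b c : L, ⁅h, a⁆ = -a ∧ -a ∈ C ∧ ⁅h, b⁆ = 0 ∧
        ⁅h, c⁆ = c ∧ c ∈ C ∧ x = a + b + c} :=
  statement2_general h hgrad C hCcl hCcv hCcone hCinv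
end

section
/- For every g = [[a,b],[c,d]] ∈ SL₂(ℝ) one has h − g·h·g⁻¹ ∈ C if and only if ab ≥ 0, cd ≥ 0 and bc ≥ 0. Consequently the compression semigroup S(h,C) := {g ∈ SL₂(ℝ) : h − Ad(g)h ∈ C} equals {[[a,b],[c,d]] ∈ SL₂(ℝ) : ab ≥ 0, cd ≥ 0, bc ≥ 0}. -/
open Matrix

/-- The grading element `h = diag(1/2, -1/2)` of `sl₂(ℝ)`. -/
noncomputable def hSL2 : Matrix (Fin 2) (Fin 2) ℝ := !![(1 : ℝ)/2, 0; 0, -(1/2)]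

/-- The invariant cone `C = {[[a,b],[c,−a]] : b ≥ 0, c ≤ 0, a² ≤ −bc}` in `sl₂(ℝ)`. -/
def CSL2 : Set (Matrix (Fin 2) (Fin 2) ℝ) :=
  {m | m 1 1 = -(m 0 0) ∧ 0 ≤ m 0 1 ∧ m 1 0 ≤ 0 ∧ (m 0 0) ^ 2 ≤ -(m 0 1 * m 1 0)}

/-! For `g = [[a,b],[c,d]] ∈ SL₂(ℝ)` one has `h - g h g⁻¹ = [[-bc, ab], [-cd, bc]]`, and the
cone condition `(bc)² ≤ ab·cd` reduces to `bc ≥ 0` because `ab·cd = bc·ad = bc + (bc)²`. -/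

open scoped MatrixGroups

lemma SL2_det_fin_two {R : Type*} [CommRing R] (g : SL(2, R)) :
    g 0 0 * g 1 1 - g 0 1 * g 1 0 = 1 := by
  rw [← det_fin_two]
  exact g.det_coe

open Matrix.SpecialLinearGroup in
lemma hSL2_sub_conj (g : SL(2, ℝ)) :
    hSL2 - (g : Matrix (Fin 2) (Fin 2) ℝ) * hSL2 * ((g⁻¹ : SL(2, ℝ)) : Matrix (Fin 2) (Fin 2) ℝ) =
      !![-(g 0 1 * g 1 0), g 0 0 * g 0 1; -(g 1 0 * g 1 1), g 0 1 * g 1 0] := by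
  have hdet := SL2_det_fin_two g
  rw [coe_inv, adjugate_fin_two]
  ext i j
  fin_cases i <;> fin_cases j <;>
    simp only [hSL2, Fin.zero_eta, Fin.mk_one, Matrix.sub_apply, of_apply, cons_val', cons_val_zero,
      cons_val_one, cons_val_fin_one, mul_apply, Fin.sum_univ_two] <;> linarith

lemma mem_CSL2_iff (t p q : ℝ) :
    !![-t, p; -q, t] ∈ CSL2 ↔ 0 ≤ p ∧ 0 ≤ q ∧ t ^ 2 ≤ p * q := by
  simp only [CSL2, Set.mem_ofPred_eq, of_apply, cons_val', cons_val_zero, cons_val_one,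
    empty_val', cons_val_fin_one, neg_neg, neg_sq, mul_neg, neg_nonpos, true_and]

lemma sq_mul_le_mul_mul_iff_of_det_eq_one {R : Type*} [CommRing R] [LinearOrder R]
    [IsStrictOrderedRing R] {a b c d : R} (h : a * d - b * c = 1) :
    (b * c) ^ 2 ≤ a * b * (c * d) ↔ 0 ≤ b * c := by
  have hprod : a * b * (c * d) = b * c + (b * c) ^ 2 := by linear_combination (b * c) * h
  rw [hprod, le_add_iff_nonneg_left]

lemma hSL2_sub_conj_mem_CSL2_iff (g : SL(2, ℝ)) :
    hSL2 - (g : Matrix (Fin 2) (Fin 2) ℝ) * hSL2 * ((g⁻¹ : SL(2, ℝ)) : Matrix (Fin 2) (Fin 2) ℝ)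
        ∈ CSL2 ↔ 0 ≤ g 0 0 * g 0 1 ∧ 0 ≤ g 1 0 * g 1 1 ∧ 0 ≤ g 0 1 * g 1 0 := by
  rw [hSL2_sub_conj, mem_CSL2_iff, sq_mul_le_mul_mul_iff_of_det_eq_one (SL2_det_fin_two g)]

/-- for `g = [[a,b],[c,d]] ∈ SL₂(ℝ)` we have `h − g·h·g⁻¹ ∈ C` iff
`ab ≥ 0`, `cd ≥ 0` and `bc ≥ 0`; consequently
`S(h,C) = {g ∈ SL₂(ℝ) : ab ≥ 0, cd ≥ 0, bc ≥ 0}`. -/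
theorem statement5 :
    (∀ g : Matrix.SpecialLinearGroup (Fin 2) ℝ,
      (hSL2 - (g : Matrix (Fin 2) (Fin 2) ℝ) * hSL2 *
          ((g⁻¹ : Matrix.SpecialLinearGroup (Fin 2) ℝ) : Matrix (Fin 2) (Fin 2) ℝ) ∈ CSL2) ↔
        (0 ≤ (g : Matrix (Fin 2) (Fin 2) ℝ) 0 0 * (g : Matrix (Fin 2) (Fin 2) ℝ) 0 1 ∧
         0 ≤ (g : Matrix (Fin 2) (Fin 2) ℝ) 1 0 * (g : Matrix (Fin 2) (Fin 2) ℝ) 1 1 ∧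
         0 ≤ (g : Matrix (Fin 2) (Fin 2) ℝ) 0 1 * (g : Matrix (Fin 2) (Fin 2) ℝ) 1 0)) ∧
    {g : Matrix.SpecialLinearGroup (Fin 2) ℝ |
        hSL2 - (g : Matrix (Fin 2) (Fin 2) ℝ) * hSL2 *
          ((g⁻¹ : Matrix.SpecialLinearGroup (Fin 2) ℝ) : Matrix (Fin 2) (Fin 2) ℝ) ∈ CSL2} =
      {g : Matrix.SpecialLinearGroup (Fin 2) ℝ |
        0 ≤ (g : Matrix (Fin 2) (Fin 2) ℝ) 0 0 * (g : Matrix (Fin 2) (Fin 2) ℝ) 0 1 ∧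
        0 ≤ (g : Matrix (Fin 2) (Fin 2) ℝ) 1 0 * (g : Matrix (Fin 2) (Fin 2) ℝ) 1 1 ∧
        0 ≤ (g : Matrix (Fin 2) (Fin 2) ℝ) 0 1 * (g : Matrix (Fin 2) (Fin 2) ℝ) 1 0} :=
  ⟨hSL2_sub_conj_mem_CSL2_iff, Set.ext hSL2_sub_conj_mem_CSL2_iff⟩
end

section
/- The set C = {[[a,b],[c,−a]] : a,b,c ∈ ℝ, b ≥ 0, c ≤ 0, a² ≤ −bc} is a closed convex cone in sl₂(ℝ) which is pointed (C ∩ (−C) = {0}), generating (C − C = sl₂(ℝ)), and invariant under the adjoint action: g·C·g⁻¹ = C for every g ∈ SL₂(ℝ). Moreover C = {x ∈ sl₂(ℝ) : det x ≥ 0 and b − c ≥ 0}, where b and c denote the upper-right and lower-left entries of x. -/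
/-!
`C` is the cone of `x ∈ sl₂(ℝ)` whose quadratic form `v ↦ ω(x v, v)` is positive semidefinite,
where `ω(u, w) = u₀ w₁ − u₁ w₀` is the area form: for `x = [[a, b], [c, −a]]` this form is
`b t² + 2 a s t − c s²` on `v = (s, t)`. The form depends linearly on `x`, which makes `C` a closed
convex cone, and `ω` is `SL₂`-invariant, so `ω(g x g⁻¹ v, v) = ω(x g⁻¹ v, g⁻¹ v)` and `C` is
invariant under conjugation. It is generating because `[[0, 1], [−1, 0]]` lies in its interior.
-/

open Matrix

theorem Matrix.SpecialLinearGroup.coe_mul_coe_inv {n R : Type*} [Fintype n] [DecidableEq n]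
    [CommRing R] (g : SpecialLinearGroup n R) :
    (g : Matrix n n R) * (g⁻¹ : SpecialLinearGroup n R) = 1 := by
  rw [← coe_mul, mul_inv_cancel, coe_one]

theorem Matrix.SpecialLinearGroup.coe_inv_mul_coe {n R : Type*} [Fintype n] [DecidableEq n]
    [CommRing R] (g : SpecialLinearGroup n R) :
    ((g⁻¹ : SpecialLinearGroup n R) : Matrix n n R) * g = 1 := by
  rw [← coe_mul, inv_mul_cancel, coe_one]

section sympForm

variable {R : Type*} [CommRing R]

/-- `sympForm v x = ω(x v, v)`, with the area form `ω(u, w) = det [u; w]`. -/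
def sympForm (v : Fin 2 → R) (x : Matrix (Fin 2) (Fin 2) R) : R :=
  (of ![x *ᵥ v, v]).det

theorem sympForm_eq (v : Fin 2 → R) (x : Matrix (Fin 2) (Fin 2) R) :
    sympForm v x = x 0 1 * v 1 ^ 2 + (x 0 0 - x 1 1) * v 0 * v 1 - x 1 0 * v 0 ^ 2 := by
  simp [sympForm, det_fin_two]
  ring

theorem sympForm_add (v : Fin 2 → R) (x y : Matrix (Fin 2) (Fin 2) R) :
    sympForm v (x + y) = sympForm v x + sympForm v y := by
  simp only [sympForm_eq, Matrix.add_apply]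
  ring

theorem sympForm_smul (v : Fin 2 → R) (r : R) (x : Matrix (Fin 2) (Fin 2) R) :
    sympForm v (r • x) = r * sympForm v x := by
  simp only [sympForm_eq, Matrix.smul_apply, smul_eq_mul]
  ring

theorem det_of_mulVec_mulVec (g : Matrix (Fin 2) (Fin 2) R) (u v : Fin 2 → R) :
    (of ![g *ᵥ u, g *ᵥ v]).det = g.det * (of ![u, v]).det := by
  simp [det_fin_two]
  ring

theorem sympForm_conj (g : SpecialLinearGroup (Fin 2) R) (v : Fin 2 → R)
    (x : Matrix (Fin 2) (Fin 2) R) :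
    sympForm v (g * x * (g⁻¹ : SpecialLinearGroup (Fin 2) R)) =
      sympForm ((g⁻¹ : SpecialLinearGroup (Fin 2) R) *ᵥ v) x := by
  calc sympForm v (g * x * (g⁻¹ : SpecialLinearGroup (Fin 2) R))
      = (of ![(g : Matrix (Fin 2) (Fin 2) R) *ᵥ x *ᵥ (g⁻¹ : SpecialLinearGroup (Fin 2) R) *ᵥ v,
          (g : Matrix (Fin 2) (Fin 2) R) *ᵥ (g⁻¹ : SpecialLinearGroup (Fin 2) R) *ᵥ v]).det := by
        rw [sympForm, mulVec_mulVec, mulVec_mulVec, mulVec_mulVec,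
          SpecialLinearGroup.coe_mul_coe_inv, one_mulVec, Matrix.mul_assoc]
    _ = _ := by rw [det_of_mulVec_mulVec, g.det_coe, one_mul, sympForm]

end sympForm

theorem forall_sympForm_nonneg_iff {K : Type*} [Field K] [LinearOrder K] [IsStrictOrderedRing K]
    {x : Matrix (Fin 2) (Fin 2) K} (hx : x 1 1 = -x 0 0) :
    (∀ v, 0 ≤ sympForm v x) ↔ 0 ≤ x 0 1 ∧ x 1 0 ≤ 0 ∧ x 0 0 ^ 2 ≤ -(x 0 1 * x 1 0) := by
  simp only [sympForm_eq, hx]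
  constructor
  · intro h
    have hdisc : discrim (-x 1 0) (2 * x 0 0) (x 0 1) ≤ 0 :=
      discrim_le_zero fun s => (h ![s, 1]).trans_eq (by simp; ring)
    refine ⟨by simpa using h ![0, 1], by simpa using h ![1, 0], ?_⟩
    rw [discrim] at hdisc
    linarith
  · rintro ⟨hb, hc, ha⟩ v
    rcases hb.eq_or_lt with hb0 | hb0
    · have ha0 : x 0 0 = 0 := by nlinarith
      rw [← hb0, ha0]
      nlinarith [sq_nonneg (v 0)]
    · have hsq : x 0 1 * (x 0 1 * v 1 ^ 2 + (x 0 0 - -x 0 0) * v 0 * v 1 - x 1 0 * v 0 ^ 2) =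
          (x 0 1 * v 1 + x 0 0 * v 0) ^ 2 + (-(x 0 1 * x 1 0) - x 0 0 ^ 2) * v 0 ^ 2 := by ring
      refine nonneg_of_mul_nonneg_right (hsq ▸ ?_) hb0
      exact add_nonneg (sq_nonneg _) (mul_nonneg (sub_nonneg.2 ha) (sq_nonneg _))

theorem mem_CSL2_iff_s6 {x : Matrix (Fin 2) (Fin 2) ℝ} :
    x ∈ CSL2 ↔ x.trace = 0 ∧ ∀ v, 0 ≤ sympForm v x := by
  have hsl : x.trace = 0 ↔ x 1 1 = -x 0 0 := by
    rw [trace_fin_two, add_comm, add_eq_zero_iff_eq_neg]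
  rw [hsl]
  exact and_congr_right fun h => (forall_sympForm_nonneg_iff h).symm

theorem add_mem_CSL2 {x y : Matrix (Fin 2) (Fin 2) ℝ} (hx : x ∈ CSL2) (hy : y ∈ CSL2) :
    x + y ∈ CSL2 := by
  rw [mem_CSL2_iff_s6] at hx hy ⊢
  refine ⟨by rw [trace_add, hx.1, hy.1, add_zero], fun v => ?_⟩
  rw [sympForm_add]
  exact add_nonneg (hx.2 v) (hy.2 v)

theorem smul_mem_CSL2 {r : ℝ} (hr : 0 ≤ r) {x : Matrix (Fin 2) (Fin 2) ℝ} (hx : x ∈ CSL2) :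
    r • x ∈ CSL2 := by
  rw [mem_CSL2_iff_s6] at hx ⊢
  refine ⟨by rw [trace_smul, hx.1, smul_zero], fun v => ?_⟩
  rw [sympForm_smul]
  exact mul_nonneg hr (hx.2 v)

theorem convex_CSL2 : Convex ℝ CSL2 :=
  fun _ hx _ hy _ _ ha hb _ => add_mem_CSL2 (smul_mem_CSL2 ha hx) (smul_mem_CSL2 hb hy)

theorem isClosed_CSL2 : IsClosed CSL2 := by
  have hC : CSL2 = {x | x.trace = 0} ∩ ⋂ v, {x | 0 ≤ sympForm v x} := by
    ext x
    simp [mem_CSL2_iff_s6]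
  rw [hC]
  refine (isClosed_eq (by fun_prop) continuous_const).inter
    (isClosed_iInter fun v => isClosed_le continuous_const ?_)
  rw [show sympForm v = _ from funext (sympForm_eq v)]
  fun_prop

theorem CSL2_inter_neg_CSL2 : CSL2 ∩ -CSL2 = {0} := by
  ext x
  simp only [CSL2, Set.mem_inter_iff, Set.mem_neg, Set.mem_ofPred_eq, Set.mem_singleton_iff,
    Matrix.neg_apply]
  constructor
  · rintro ⟨⟨h11, hb, hc, ha⟩, -, hb', hc', -⟩
    have hb0 : x 0 1 = 0 := by linarith
    have hc0 : x 1 0 = 0 := by linarith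
    have ha0 : x 0 0 = 0 := by nlinarith
    ext i j
    fin_cases i <;> fin_cases j <;> simp [h11, ha0, hb0, hc0]
  · rintro rfl
    simp

theorem add_smul_mem_CSL2 {z : Matrix (Fin 2) (Fin 2) ℝ} (hz : z.trace = 0) :
    z + (|z 0 0| + |z 0 1| + |z 1 0|) • !![0, 1; -1, 0] ∈ CSL2 := by
  rw [trace_fin_two] at hz
  have hb : |z 0 0| ≤ z 0 1 + (|z 0 0| + |z 0 1| + |z 1 0|) := by
    linarith [neg_abs_le (z 0 1), abs_nonneg (z 1 0)]
  have hc : |z 0 0| ≤ -(z 1 0 - (|z 0 0| + |z 0 1| + |z 1 0|)) := by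
    linarith [le_abs_self (z 1 0), abs_nonneg (z 0 1)]
  simp only [CSL2, Set.mem_ofPred_eq, Matrix.add_apply, Matrix.smul_apply, of_apply, cons_val',
    cons_val_zero, cons_val_one, empty_val', cons_val_fin_one, smul_eq_mul]
  refine ⟨by linarith, by linarith [abs_nonneg (z 0 0)], by linarith [abs_nonneg (z 0 0)], ?_⟩
  nlinarith [mul_le_mul hb hc (abs_nonneg _) ((abs_nonneg _).trans hb), sq_abs (z 0 0)]

theorem exists_eq_sub_mem_CSL2_iff {z : Matrix (Fin 2) (Fin 2) ℝ} :
    (∃ x ∈ CSL2, ∃ y ∈ CSL2, z = x - y) ↔ z.trace = 0 := by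
  constructor
  · rintro ⟨x, hx, y, hy, rfl⟩
    rw [mem_CSL2_iff_s6] at hx hy
    rw [trace_sub, hx.1, hy.1, sub_zero]
  · intro hz
    have hJ : !![0, 1; -1, 0] ∈ CSL2 := by norm_num [CSL2]
    have ht : 0 ≤ |z 0 0| + |z 0 1| + |z 1 0| := by positivity
    exact ⟨_, add_smul_mem_CSL2 hz, _, smul_mem_CSL2 ht hJ, (add_sub_cancel_right _ _).symm⟩

theorem conj_mem_CSL2 (g : SpecialLinearGroup (Fin 2) ℝ) {x : Matrix (Fin 2) (Fin 2) ℝ}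
    (hx : x ∈ CSL2) :
    (g : Matrix (Fin 2) (Fin 2) ℝ) * x * ((g⁻¹ : SpecialLinearGroup (Fin 2) ℝ) :
      Matrix (Fin 2) (Fin 2) ℝ) ∈ CSL2 := by
  rw [mem_CSL2_iff_s6] at hx ⊢
  refine ⟨?_, fun v => sympForm_conj g v x ▸ hx.2 _⟩
  rw [trace_mul_cycle, SpecialLinearGroup.coe_inv_mul_coe, Matrix.one_mul, hx.1]

theorem image_conj_CSL2 (g : SpecialLinearGroup (Fin 2) ℝ) :
    (fun m => (g : Matrix (Fin 2) (Fin 2) ℝ) * m *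
      ((g⁻¹ : SpecialLinearGroup (Fin 2) ℝ) : Matrix (Fin 2) (Fin 2) ℝ)) '' CSL2 = CSL2 := by
  refine Set.Subset.antisymm (Set.image_subset_iff.2 fun x hx => conj_mem_CSL2 g hx)
    fun x (hx : x ∈ CSL2) => ⟨_, conj_mem_CSL2 g⁻¹ hx, ?_⟩
  dsimp only
  rw [← Matrix.mul_assoc, ← Matrix.mul_assoc, SpecialLinearGroup.coe_mul_coe_inv, Matrix.one_mul,
    Matrix.mul_assoc, inv_inv, SpecialLinearGroup.coe_mul_coe_inv, Matrix.mul_one]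

theorem CSL2_eq_setOf_det : CSL2 = {m : Matrix (Fin 2) (Fin 2) ℝ |
    Matrix.trace m = 0 ∧ 0 ≤ m.det ∧ 0 ≤ m 0 1 - m 1 0} := by
  ext m
  simp only [CSL2, Set.mem_ofPred_eq, trace_fin_two, det_fin_two]
  constructor
  · rintro ⟨h11, hb, hc, ha⟩
    refine ⟨by linarith, ?_, by linarith⟩
    rw [h11]
    linarith
  · rintro ⟨htr, hdet, hbc⟩
    have h11 : m 1 1 = -m 0 0 := by linarith
    rw [h11] at hdet
    refine ⟨h11, ?_, ?_, by linarith⟩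
    · nlinarith [sq_nonneg (m 0 0), sq_nonneg (m 0 1)]
    · nlinarith [sq_nonneg (m 0 0), sq_nonneg (m 1 0)]

/-- `C` is a closed convex cone in `sl₂(ℝ)` which is pointed, generating
(`C − C = sl₂(ℝ)`), and invariant under the adjoint action of `SL₂(ℝ)`; moreover
`C = {x ∈ sl₂(ℝ) : det x ≥ 0, b − c ≥ 0}`. -/
theorem statement6 :
    IsClosed CSL2 ∧
    Convex ℝ CSL2 ∧
    (∀ r : ℝ, 0 ≤ r → ∀ x ∈ CSL2, r • x ∈ CSL2) ∧
    CSL2 ∩ (-CSL2) = {0} ∧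
    {z : Matrix (Fin 2) (Fin 2) ℝ | ∃ x ∈ CSL2, ∃ y ∈ CSL2, z = x - y} =
      {m : Matrix (Fin 2) (Fin 2) ℝ | Matrix.trace m = 0} ∧
    (∀ g : Matrix.SpecialLinearGroup (Fin 2) ℝ,
      (fun m => (g : Matrix (Fin 2) (Fin 2) ℝ) * m *
        ((g⁻¹ : Matrix.SpecialLinearGroup (Fin 2) ℝ) : Matrix (Fin 2) (Fin 2) ℝ)) '' CSL2
        = CSL2) ∧
    CSL2 = {m : Matrix (Fin 2) (Fin 2) ℝ |
      Matrix.trace m = 0 ∧ 0 ≤ m.det ∧ 0 ≤ m 0 1 - m 1 0} :=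
  ⟨isClosed_CSL2, convex_CSL2, fun _ hr _ hx => smul_mem_CSL2 hr hx, CSL2_inter_neg_CSL2,
    Set.ext fun _ => exists_eq_sub_mem_CSL2_iff, image_conj_CSL2, CSL2_eq_setOf_det⟩
end

section
/- For every z ∈ ℂ with Re z > 0, the function x ↦ 1/(x+1) − 1/(x+z) is Lebesgue integrable on (0,∞) and ∫₀^∞ (1/(x+1) − 1/(x+z)) dx = Log z, where Log denotes the principal branch of the complex logarithm. -/
/-! For `Re a, Re b > 0` the function `t ↦ log (t + a) - log (t + b)` is an antiderivative of
`1/(t + a) - 1/(t + b)` on `[0, ∞)`, since `t + a` and `t + b` stay in the right half-plane where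
`log` is holomorphic. It tends to `0` at infinity because `log (t + a) = Real.log t + log (1 + a/t)`
for large `t`. The integrand is `O(t⁻²)`, so the improper fundamental theorem of calculus applies;
take `a = 1`. -/

open MeasureTheory Filter Topology Set

namespace Complex

lemma ofReal_add_mem_slitPlane {a : ℂ} (ha : 0 < a.re) {x : ℝ} (hx : 0 ≤ x) :
    (x : ℂ) + a ∈ slitPlane :=
  mem_slitPlane_iff.mpr <| Or.inl <| by simp; linarith

lemma add_re_le_norm_ofReal_add (a : ℂ) (x : ℝ) : x + a.re ≤ ‖(x : ℂ) + a‖ := by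
  simpa using re_le_norm ((x : ℂ) + a)

lemma tendsto_log_ofReal_add_sub_log (a : ℂ) :
    Tendsto (fun x : ℝ => log (x + a) - Real.log x) atTop (𝓝 0) := by
  have h_one : Tendsto (fun x : ℝ => 1 + a / x) atTop (𝓝 1) := by
    have : Tendsto (fun x : ℝ => ((x⁻¹ : ℝ) : ℂ)) atTop (𝓝 0) := by
      simpa [Function.comp_def] using (continuous_ofReal.tendsto 0).comp tendsto_inv_atTop_zero
    simpa [div_eq_mul_inv] using (this.const_mul a).const_add 1
  have h_log : Tendsto (fun x : ℝ => log (1 + a / x)) atTop (𝓝 0) := by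
    simpa using h_one.clog one_mem_slitPlane
  refine h_log.congr' ?_
  filter_upwards [eventually_gt_atTop 0, h_one.eventually_ne one_ne_zero] with x hx hne
  have hx' : (x : ℂ) ≠ 0 := ofReal_ne_zero.mpr hx.ne'
  rw [show (x : ℂ) + a = x * (1 + a / x) by field_simp, log_ofReal_mul hx hne]
  ring

lemma tendsto_log_ofReal_add_sub_log_ofReal_add (a b : ℂ) :
    Tendsto (fun x : ℝ => log (x + a) - log (x + b)) atTop (𝓝 0) := by
  simpa using (tendsto_log_ofReal_add_sub_log a).sub (tendsto_log_ofReal_add_sub_log b)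

lemma norm_one_div_add_sub_one_div_add_le {a b : ℂ} (ha : 0 < a.re) (hb : 0 < b.re) {x : ℝ}
    (hx : 0 ≤ x) :
    ‖1 / ((x : ℂ) + a) - 1 / ((x : ℂ) + b)‖ ≤ ‖b - a‖ * (x + min a.re b.re) ^ (-2 : ℝ) := by
  set c := min a.re b.re
  have hc : 0 < x + c := by positivity
  have hxa : x + c ≤ ‖(x : ℂ) + a‖ := by
    linarith [min_le_left a.re b.re, add_re_le_norm_ofReal_add a x]
  have hxb : x + c ≤ ‖(x : ℂ) + b‖ := by
    linarith [min_le_right a.re b.re, add_re_le_norm_ofReal_add b x]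
  have hxa0 := slitPlane_ne_zero (ofReal_add_mem_slitPlane ha hx)
  have hxb0 := slitPlane_ne_zero (ofReal_add_mem_slitPlane hb hx)
  calc ‖1 / ((x : ℂ) + a) - 1 / ((x : ℂ) + b)‖
      = ‖b - a‖ / (‖(x : ℂ) + a‖ * ‖(x : ℂ) + b‖) := by
        rw [div_sub_div _ _ hxa0 hxb0, norm_div, norm_mul]; ring_nf
    _ ≤ ‖b - a‖ / ((x + c) * (x + c)) := by gcongr
    _ = ‖b - a‖ * (x + c) ^ (-2 : ℝ) := by
        rw [Real.rpow_neg hc.le, Real.rpow_two, sq, div_eq_mul_inv]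

lemma integrableOn_Ioi_one_div_add_sub_one_div_add {a b : ℂ} (ha : 0 < a.re) (hb : 0 < b.re) :
    IntegrableOn (fun x : ℝ => 1 / ((x : ℂ) + a) - 1 / ((x : ℂ) + b)) (Ioi 0) := by
  have hcont : ContinuousOn (fun x : ℝ => 1 / ((x : ℂ) + a) - 1 / ((x : ℂ) + b)) (Ioi 0) :=
    (continuousOn_const.div (by fun_prop)
      fun x hx => slitPlane_ne_zero (ofReal_add_mem_slitPlane ha (le_of_lt hx))).sub
    (continuousOn_const.div (by fun_prop)
      fun x hx => slitPlane_ne_zero (ofReal_add_mem_slitPlane hb (le_of_lt hx)))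
  refine Integrable.mono'
    ((integrableOn_add_rpow_Ioi_of_lt (a := -2) (m := min a.re b.re) (by norm_num)
      (by simp [ha, hb])).const_mul ‖b - a‖)
    (hcont.aestronglyMeasurable measurableSet_Ioi) ?_
  filter_upwards [ae_restrict_mem measurableSet_Ioi] with x hx
  exact norm_one_div_add_sub_one_div_add_le ha hb (le_of_lt hx)

lemma hasDerivAt_log_ofReal_add {a : ℂ} {x : ℝ} (h : (x : ℂ) + a ∈ slitPlane) :
    HasDerivAt (fun t : ℝ => log (t + a)) (1 / (x + a)) x := by
  simpa using ((hasDerivAt_id (x : ℂ)).add_const a).comp_ofReal.clog_real h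

theorem integral_Ioi_one_div_add_sub_one_div_add {a b : ℂ} (ha : 0 < a.re) (hb : 0 < b.re) :
    ∫ x : ℝ in Ioi 0, (1 / ((x : ℂ) + a) - 1 / ((x : ℂ) + b)) = log b - log a := by
  have hderiv : ∀ x ∈ Ici (0 : ℝ), HasDerivAt (fun t : ℝ => log (t + a) - log (t + b))
      (1 / ((x : ℂ) + a) - 1 / ((x : ℂ) + b)) x := fun x hx =>
    (hasDerivAt_log_ofReal_add (ofReal_add_mem_slitPlane ha hx)).sub
      (hasDerivAt_log_ofReal_add (ofReal_add_mem_slitPlane hb hx))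
  rw [integral_Ioi_of_hasDerivAt_of_tendsto' hderiv
    (integrableOn_Ioi_one_div_add_sub_one_div_add ha hb)
    (tendsto_log_ofReal_add_sub_log_ofReal_add a b)]
  simp

end Complex

/-- for `Re z > 0`, the function `x ↦ 1/(x+1) − 1/(x+z)` is Lebesgue
integrable on `(0,∞)` and `∫₀^∞ (1/(x+1) − 1/(x+z)) dx = Log z`, where `Log` is the
principal branch of the complex logarithm. -/
theorem statement7 (z : ℂ) (hz : 0 < z.re) :
    IntegrableOn (fun x : ℝ => 1 / ((x : ℂ) + 1) - 1 / ((x : ℂ) + z)) (Set.Ioi 0) ∧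
    ∫ x : ℝ in Set.Ioi 0, (1 / ((x : ℂ) + 1) - 1 / ((x : ℂ) + z)) = Complex.log z := by
  refine ⟨Complex.integrableOn_Ioi_one_div_add_sub_one_div_add (by simp) hz, ?_⟩
  simpa using Complex.integral_Ioi_one_div_add_sub_one_div_add (a := 1) (by simp) hz
end

section
/- The function F(z) := ∫₀^∞ (1/(x+1) − 1/(x+z)) dx is complex differentiable at every point z of the open right half-plane {z ∈ ℂ : Re z > 0}, with derivative F′(z) = 1/z, and F(1) = 0. -/
/-!
Differentiate under the integral sign: the `w`-derivative of the integrand is `(x + w)⁻²`,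
which on `{w | Re z / 2 < Re w}` is dominated by the integrable `(x + Re z / 2)⁻²`, and
`∫₀^∞ (x + z)⁻² dx = 1/z` because `-(x + z)⁻¹` is a primitive vanishing at infinity.
-/

open MeasureTheory Set Filter Topology

lemma ofReal_add_ne_zero {x : ℝ} {u : ℂ} (hx : 0 ≤ x) (hu : 0 < u.re) : (x : ℂ) + u ≠ 0 := by
  intro h
  have := congrArg Complex.re h
  simp only [Complex.add_re, Complex.ofReal_re, Complex.zero_re] at this
  linarith

lemma add_re_le_norm_ofReal_add (x : ℝ) (u : ℂ) : x + u.re ≤ ‖(x : ℂ) + u‖ := by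
  simpa using Complex.re_le_norm ((x : ℂ) + u)

lemma norm_inv_ofReal_add_mul_le {x c : ℝ} {u v : ℂ} (hc : 0 < x + c) (hu : c ≤ u.re)
    (hv : c ≤ v.re) : ‖(((x : ℂ) + u) * ((x : ℂ) + v))⁻¹‖ ≤ ((x + c) ^ 2)⁻¹ := by
  rw [norm_inv, norm_mul, sq]
  refine inv_anti₀ (mul_pos hc hc) (mul_le_mul ?_ ?_ hc.le (norm_nonneg _))
  · linarith [add_re_le_norm_ofReal_add x u]
  · linarith [add_re_le_norm_ofReal_add x v]

lemma integrableOn_Ioi_inv_add_sq {c : ℝ} (hc : 0 < c) :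
    IntegrableOn (fun x : ℝ => ((x + c) ^ 2)⁻¹) (Ioi 0) := by
  have hderiv : ∀ x ∈ Ici (0 : ℝ), HasDerivAt (fun x => -(x + c)⁻¹) ((x + c) ^ 2)⁻¹ x :=
    fun x hx => by
      have hxc : x + c ≠ 0 := by linarith [mem_Ici.1 hx]
      simpa using ((hasDerivAt_inv hxc).comp_add_const x c).fun_neg
  refine integrableOn_Ioi_deriv_of_nonneg' hderiv (fun x _ => by positivity) (l := 0) ?_
  simpa using (tendsto_inv_atTop_zero.comp (tendsto_atTop_add_const_right atTop c tendsto_id)).neg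

lemma integrableOn_inv_ofReal_add_mul {u v : ℂ} (hu : 0 < u.re) (hv : 0 < v.re) :
    IntegrableOn (fun x : ℝ => (((x : ℂ) + u) * ((x : ℂ) + v))⁻¹) (Ioi 0) := by
  refine (integrableOn_Ioi_inv_add_sq (lt_min hu hv)).mono' (by fun_prop) ?_
  filter_upwards [ae_restrict_mem measurableSet_Ioi] with x hx
  exact norm_inv_ofReal_add_mul_le (by linarith [mem_Ioi.1 hx, lt_min hu hv])
    (min_le_left _ _) (min_le_right _ _)

lemma integrableOn_one_div_sub_one_div {z : ℂ} (hz : 0 < z.re) :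
    IntegrableOn (fun x : ℝ => 1 / ((x : ℂ) + 1) - 1 / ((x : ℂ) + z)) (Ioi 0) := by
  refine IntegrableOn.congr_fun
    (Integrable.const_mul (integrableOn_inv_ofReal_add_mul (u := 1) (by simp) hz) (z - 1))
    (fun x hx => ?_) measurableSet_Ioi
  have hx1 := ofReal_add_ne_zero (le_of_lt hx) (u := 1) (by simp)
  have hxz := ofReal_add_ne_zero (le_of_lt hx) hz
  field_simp
  ring

lemma integral_Ioi_inv_ofReal_add_sq {z : ℂ} (hz : 0 < z.re) :
    ∫ x : ℝ in Ioi 0, (((x : ℂ) + z) ^ 2)⁻¹ = z⁻¹ := by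
  have hderiv : ∀ x ∈ Ici (0 : ℝ),
      HasDerivAt (fun x : ℝ => -((x : ℂ) + z)⁻¹) (((x : ℂ) + z) ^ 2)⁻¹ x := fun x hx => by
    simpa using
      ((hasDerivAt_inv (ofReal_add_ne_zero hx hz)).comp_add_const (x : ℂ) z).fun_neg.comp_ofReal
  have hnorm : Tendsto (fun x : ℝ => ‖(x : ℂ) + z‖) atTop atTop :=
    tendsto_atTop_mono (add_re_le_norm_ofReal_add · z)
      (tendsto_atTop_add_const_right _ _ tendsto_id)
  have hlim : Tendsto (fun x : ℝ => -((x : ℂ) + z)⁻¹) atTop (𝓝 0) := by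
    simpa using (tendsto_inv₀_cobounded.comp (tendsto_norm_atTop_iff_cobounded.1 hnorm)).neg
  have hint : IntegrableOn (fun x : ℝ => (((x : ℂ) + z) ^ 2)⁻¹) (Ioi 0) := by
    simpa only [sq] using integrableOn_inv_ofReal_add_mul hz hz
  rw [integral_Ioi_of_hasDerivAt_of_tendsto
    (hderiv 0 self_mem_Ici).continuousAt.continuousWithinAt
    (fun x hx => hderiv x (mem_Ioi.1 hx).le) hint hlim]
  simp

lemma hasDerivAt_one_div_sub_one_div {𝕜 : Type*} [NontriviallyNormedField 𝕜] {a c w : 𝕜}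
    (h : c + w ≠ 0) : HasDerivAt (fun w => 1 / a - 1 / (c + w)) ((c + w) ^ 2)⁻¹ w := by
  simpa using ((hasDerivAt_inv h).comp_const_add c w).const_sub (1 / a)

lemma hasDerivAt_integral_one_div_sub_one_div {z : ℂ} (hz : 0 < z.re) :
    HasDerivAt (fun w : ℂ => ∫ x : ℝ in Ioi 0, (1 / ((x : ℂ) + 1) - 1 / ((x : ℂ) + w)))
      (∫ x : ℝ in Ioi 0, (((x : ℂ) + z) ^ 2)⁻¹) z := by
  have hz2 : 0 < z.re / 2 := half_pos hz
  have hs : {w : ℂ | z.re / 2 < w.re} ∈ 𝓝 z :=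
    (isOpen_lt continuous_const Complex.continuous_re).mem_nhds (half_lt_self hz)
  refine (hasDerivAt_integral_of_dominated_loc_of_deriv_le
    (F := fun w x => 1 / ((x : ℂ) + 1) - 1 / ((x : ℂ) + w)) (F' := fun w x => (((x : ℂ) + w) ^ 2)⁻¹)
    (bound := fun x : ℝ => ((x + z.re / 2) ^ 2)⁻¹) hs (Eventually.of_forall fun w => by fun_prop)
    (integrableOn_one_div_sub_one_div hz) (by fun_prop) ?_ (integrableOn_Ioi_inv_add_sq hz2) ?_).2
  · filter_upwards [ae_restrict_mem measurableSet_Ioi] with x hx w hw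
    rw [sq]
    exact norm_inv_ofReal_add_mul_le (by linarith [mem_Ioi.1 hx]) hw.le hw.le
  · filter_upwards [ae_restrict_mem measurableSet_Ioi] with x hx w hw
    exact hasDerivAt_one_div_sub_one_div (ofReal_add_ne_zero (mem_Ioi.1 hx).le (hz2.trans hw))

/-- the function `F(z) = ∫₀^∞ (1/(x+1) − 1/(x+z)) dx` is complex
differentiable at every `z` with `Re z > 0`, with derivative `F′(z) = 1/z`, and
`F(1) = 0`. -/
theorem statement8 :
    (∀ z : ℂ, 0 < z.re →
      HasDerivAt
        (fun w : ℂ => ∫ x : ℝ in Set.Ioi 0, (1 / ((x : ℂ) + 1) - 1 / ((x : ℂ) + w)))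
        (1 / z) z) ∧
    (∫ x : ℝ in Set.Ioi 0, (1 / ((x : ℂ) + 1) - 1 / ((x : ℂ) + 1))) = 0 := by
  refine ⟨fun z hz => ?_, by simp⟩
  rw [one_div, ← integral_Ioi_inv_ofReal_add_sq hz]
  exact hasDerivAt_integral_one_div_sub_one_div hz
end

section
/- Let S and T be densely defined closed operators from H₁ to H₂ with Γ(S) ⊆ Γ(T) (i.e. D(S) ⊆ D(T) and T extends S). For ξ ∈ H₁ let η_S(ξ) and η_T(ξ) denote the first components of the orthogonal projections of (ξ,0) onto Γ(S) and onto Γ(T), respectively. Then for every ξ ∈ H₁ the inner products ⟨ξ, η_S(ξ)⟩ and ⟨ξ, η_T(ξ)⟩ are real and satisfy 0 ≤ ⟨ξ, η_S(ξ)⟩ ≤ ⟨ξ, η_T(ξ)⟩; equivalently, (1 + S*S)⁻¹ ≤ (1 + T*T)⁻¹ as bounded positive operators on H₁. -/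
/-!
In the ℓ²-sum `H₁ ⊕ H₂` put `v = (ξ, 0)`, `a = (ηS, S ηS)` and `b = (ηT, T ηT)`. The projection
conditions say `v - a ⟂ a` and `v - b ⟂ Γ(T) ∋ a, b`. The first gives `⟪ξ, ηS⟫ = ⟪v, a⟫ = ‖a‖²`,
likewise `⟪ξ, ηT⟫ = ‖b‖²`, and subtracting gives `b - a ⟂ a`, so `‖a‖ ≤ ‖b‖` by Pythagoras.
-/

open scoped InnerProductSpace

section Orthogonality

variable {𝕜 E : Type*} [RCLike 𝕜] [NormedAddCommGroup E] [InnerProductSpace 𝕜 E]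

theorem inner_eq_norm_sq_of_inner_sub_eq_zero {v a : E} (h : ⟪v - a, a⟫_𝕜 = 0) :
    ⟪v, a⟫_𝕜 = ((‖a‖ ^ 2 : ℝ) : 𝕜) := by
  rw [inner_sub_left, sub_eq_zero] at h
  rw [h, inner_self_eq_norm_sq_to_K, RCLike.ofReal_pow]

theorem norm_le_norm_of_inner_sub_eq_zero {v a b : E} (ha : ⟪v - a, a⟫_𝕜 = 0)
    (hb : ⟪v - b, a⟫_𝕜 = 0) : ‖a‖ ≤ ‖b‖ := by
  have horth : ⟪a, b - a⟫_𝕜 = 0 := by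
    rw [inner_eq_zero_symm, show b - a = (v - a) - (v - b) by abel, inner_sub_left, ha, hb,
      sub_zero]
  have hpyth := norm_add_sq_eq_norm_sq_add_norm_sq_of_inner_eq_zero (𝕜 := 𝕜) a (b - a) horth
  rw [add_sub_cancel] at hpyth
  nlinarith [norm_nonneg a, norm_nonneg b, mul_self_nonneg ‖b - a‖]

end Orthogonality

theorem statement11_general {H₁ H₂ : Type*}
    [NormedAddCommGroup H₁] [InnerProductSpace ℂ H₁]
    [NormedAddCommGroup H₂] [InnerProductSpace ℂ H₂]
    (S T : H₁ →ₗ.[ℂ] H₂)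
    (hST : S.graph ≤ T.graph)
    (ξ ηS ηT : H₁) (hηS : ηS ∈ S.domain) (hηT : ηT ∈ T.domain)
    (hprojS : ∀ u : H₁, ∀ hu : u ∈ S.domain,
      (inner ℂ (ξ - ηS) u : ℂ) + (inner ℂ ((0 : H₂) - S ⟨ηS, hηS⟩) (S ⟨u, hu⟩) : ℂ) = 0)
    (hprojT : ∀ u : H₁, ∀ hu : u ∈ T.domain,
      (inner ℂ (ξ - ηT) u : ℂ) + (inner ℂ ((0 : H₂) - T ⟨ηT, hηT⟩) (T ⟨u, hu⟩) : ℂ) = 0) :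
    ∃ rS rT : ℝ, (inner ℂ ξ ηS : ℂ) = (rS : ℂ) ∧ (inner ℂ ξ ηT : ℂ) = (rT : ℂ) ∧
      0 ≤ rS ∧ rS ≤ rT := by
  have hle : S ≤ T := LinearPMap.le_of_le_graph hST
  have hηST : ηS ∈ T.domain := hle.1 hηS
  have hTηS : T ⟨ηS, hηST⟩ = S ⟨ηS, hηS⟩ := (hle.2 rfl).symm
  set v : WithLp 2 (H₁ × H₂) := WithLp.toLp 2 (ξ, 0)
  set a : WithLp 2 (H₁ × H₂) := WithLp.toLp 2 (ηS, S ⟨ηS, hηS⟩)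
  set b : WithLp 2 (H₁ × H₂) := WithLp.toLp 2 (ηT, T ⟨ηT, hηT⟩)
  -- The ℓ² inner product is definitionally the sum of the componentwise ones.
  have ha : ⟪v - a, a⟫_ℂ = 0 := hprojS ηS hηS
  have hb : ⟪v - b, b⟫_ℂ = 0 := hprojT ηT hηT
  have hba : ⟪v - b, a⟫_ℂ = 0 := by
    have h := hprojT ηS hηST
    rw [hTηS] at h
    exact h
  have hv (c : WithLp 2 (H₁ × H₂)) : ⟪v, c⟫_ℂ = inner ℂ ξ c.fst := by
    simp [v]
  refine ⟨‖a‖ ^ 2, ‖b‖ ^ 2, ?_, ?_, sq_nonneg _,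
    pow_le_pow_left₀ (norm_nonneg _) (norm_le_norm_of_inner_sub_eq_zero ha hba) 2⟩
  · exact (hv a).symm.trans (inner_eq_norm_sq_of_inner_sub_eq_zero ha)
  · exact (hv b).symm.trans (inner_eq_norm_sq_of_inner_sub_eq_zero hb)

/-- let `S` and `T` be densely defined closed operators from `H₁` to `H₂`
with `Γ(S) ⊆ Γ(T)`. For `ξ ∈ H₁`, let `ηS` resp. `ηT` denote the first component of the
orthogonal projection of `(ξ,0)` onto `Γ(S)` resp. `Γ(T)` (characterized by the
orthogonality relations below, where orthogonality in `H₁ ⊕ H₂` means that the sum of the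
componentwise inner products vanishes). Then `⟨ξ, ηS⟩` and `⟨ξ, ηT⟩` are real and
`0 ≤ ⟨ξ, ηS⟩ ≤ ⟨ξ, ηT⟩`; equivalently `(1 + S*S)⁻¹ ≤ (1 + T*T)⁻¹`. -/
theorem statement11 {H₁ H₂ : Type*}
    [NormedAddCommGroup H₁] [InnerProductSpace ℂ H₁] [CompleteSpace H₁]
    [NormedAddCommGroup H₂] [InnerProductSpace ℂ H₂] [CompleteSpace H₂]
    (S T : H₁ →ₗ.[ℂ] H₂)
    (hSdense : Dense (S.domain : Set H₁)) (hSclosed : IsClosed (S.graph : Set (H₁ × H₂)))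
    (hTdense : Dense (T.domain : Set H₁)) (hTclosed : IsClosed (T.graph : Set (H₁ × H₂)))
    (hST : S.graph ≤ T.graph)
    (ξ ηS ηT : H₁) (hηS : ηS ∈ S.domain) (hηT : ηT ∈ T.domain)
    (hprojS : ∀ u : H₁, ∀ hu : u ∈ S.domain,
      (inner ℂ (ξ - ηS) u : ℂ) + (inner ℂ ((0 : H₂) - S ⟨ηS, hηS⟩) (S ⟨u, hu⟩) : ℂ) = 0)
    (hprojT : ∀ u : H₁, ∀ hu : u ∈ T.domain,
      (inner ℂ (ξ - ηT) u : ℂ) + (inner ℂ ((0 : H₂) - T ⟨ηT, hηT⟩) (T ⟨u, hu⟩) : ℂ) = 0) :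
    ∃ rS rT : ℝ, (inner ℂ ξ ηS : ℂ) = (rS : ℂ) ∧ (inner ℂ ξ ηT : ℂ) = (rT : ℂ) ∧
      0 ≤ rS ∧ rS ≤ rT :=
  statement11_general S T hST ξ ηS ηT hηS hηT hprojS hprojT
end

section
/- Let E be a finite-dimensional real normed vector space and C ⊆ E a closed convex cone with C ∩ (−C) = {0}. Then for all x, y ∈ E the set (x + C) ∩ (y − C) is compact. -/
open Filter Topology

/-- let `E` be a finite-dimensional real normed vector space and
`C ⊆ E` a closed convex cone with `C ∩ (−C) = {0}`. Then for all `x, y ∈ E` the set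
`(x + C) ∩ (y − C)` is compact. -/
theorem statement15 {E : Type*} [NormedAddCommGroup E] [NormedSpace ℝ E]
    [FiniteDimensional ℝ E]
    (C : Set E) (hCcl : IsClosed C) (hCcv : Convex ℝ C)
    (hCcone : ∀ r : ℝ, 0 ≤ r → ∀ x ∈ C, r • x ∈ C)
    (hCpt : C ∩ (-C) = {0})
    (x y : E) :
    IsCompact {z : E | z - x ∈ C ∧ y - z ∈ C} := by
  set S := {z : E | z - x ∈ C ∧ y - z ∈ C} with hS
  have hclosed : IsClosed S := by
    have h1 : IsClosed ((fun z : E => z - x) ⁻¹' C) := hCcl.preimage (by continuity)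
    have h2 : IsClosed ((fun z : E => y - z) ⁻¹' C) := hCcl.preimage (by continuity)
    exact h1.inter h2
  have hbdd : Bornology.IsBounded S := by
    by_contra hb
    have hz : ∀ n : ℕ, ∃ w ∈ S, (n : ℝ) + 1 + ‖x‖ < ‖w‖ := by
      intro n
      by_contra h
      push_neg at h
      exact hb (isBounded_iff_forall_norm_le.2 ⟨(n : ℝ) + 1 + ‖x‖, h⟩)
    choose z hzS hzn using hz
    set c : ℕ → E := fun n => z n - x with hc
    have hcC : ∀ n, c n ∈ C := fun n => (hzS n).1
    have hcn : ∀ n : ℕ, (n : ℝ) + 1 < ‖c n‖ := by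
      intro n
      have h1 : ‖z n‖ - ‖x‖ ≤ ‖c n‖ := norm_sub_norm_le (z n) x
      linarith [hzn n]
    have hcpos : ∀ n, (0 : ℝ) < ‖c n‖ := fun n =>
      lt_of_le_of_lt (by positivity) (hcn n)
    set u : ℕ → E := fun n => ‖c n‖⁻¹ • c n with hu
    have huS : ∀ n, u n ∈ Metric.sphere (0 : E) 1 := by
      intro n
      simp [u, norm_smul, abs_of_pos (inv_pos.2 (hcpos n)),
        inv_mul_cancel₀ (hcpos n).ne']
    obtain ⟨v, hv, φ, hφ, hlim⟩ := (isCompact_sphere (0 : E) 1).tendsto_subseq huS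
    have huC : ∀ n, u n ∈ C := fun n =>
      hCcone _ (inv_nonneg.2 (hcpos n).le) _ (hcC n)
    have hvC : v ∈ C := hCcl.mem_of_tendsto hlim (Eventually.of_forall fun k => huC _)
    have hnorm_top : Tendsto (fun k => ‖c (φ k)‖) atTop atTop := by
      apply tendsto_atTop_mono (f := fun k : ℕ => (k : ℝ))
      · intro k
        have h1 : (k : ℝ) ≤ (φ k : ℝ) := by exact_mod_cast hφ.le_apply
        have := hcn (φ k)
        linarith
      · exact tendsto_natCast_atTop_atTop
    have hinv0 : Tendsto (fun k => ‖c (φ k)‖⁻¹) atTop (𝓝 0) :=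
      tendsto_inv_atTop_zero.comp hnorm_top
    have hwC : ∀ k, ‖c (φ k)‖⁻¹ • (y - z (φ k)) ∈ C := fun k =>
      hCcone _ (inv_nonneg.2 (hcpos (φ k)).le) _ (hzS (φ k)).2
    have hweq : ∀ k, ‖c (φ k)‖⁻¹ • (y - z (φ k))
        = ‖c (φ k)‖⁻¹ • (y - x) - u (φ k) := by
      intro k
      have : y - z (φ k) = (y - x) - c (φ k) := by simp [c]
      rw [this, smul_sub]
    have hwlim : Tendsto (fun k => ‖c (φ k)‖⁻¹ • (y - z (φ k))) atTop (𝓝 (-v)) := by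
      have h1 : Tendsto (fun k => ‖c (φ k)‖⁻¹ • (y - x)) atTop (𝓝 (0 : E)) := by
        simpa using hinv0.smul_const (y - x)
      have := h1.sub hlim
      simpa [hweq] using this
    have hnvC : -v ∈ C := hCcl.mem_of_tendsto hwlim (Eventually.of_forall fun k => hwC k)
    have hv0 : v = 0 := by
      have : v ∈ C ∩ (-C) := ⟨hvC, by simpa [Set.mem_neg] using hnvC⟩
      rw [hCpt] at this
      simpa using this
    have : ‖v‖ = 1 := by simpa using hv
    rw [hv0] at this
    simp at this
  exact Metric.isCompact_of_isClosed_isBounded hclosed hbdd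
end

section
/- Let (V, ω) be a finite-dimensional real symplectic vector space (ω a nondegenerate alternating bilinear form) and let heis(V,ω) := ℝ ⊕ V be the Heisenberg Lie algebra with bracket [(z,v), (z′,v′)] = (ω(v,v′), 0). Then every pointed invariant cone C in heis(V,ω) (a closed convex cone with C ∩ (−C) = {0} and e^{ad x}(C) = C for all x ∈ heis(V,ω)) is contained in the center ℝ ⊕ {0}; hence, up to sign, the only nonzero pointed invariant cone of this form spanning the center is ℝ₊·(1,0). -/
/-- The adjoint action `ad x` of an element `x` of the Heisenberg Lie algebra
`heis(V,ω) = ℝ ⊕ V`, with bracket `[(z,v),(z′,v′)] = (ω(v,v′), 0)`, as a linear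
endomorphism of `ℝ × V`. -/
def heisAd {V : Type*} [AddCommGroup V] [Module ℝ V]
    (ω : V →ₗ[ℝ] V →ₗ[ℝ] ℝ) (x : ℝ × V) : (ℝ × V) →ₗ[ℝ] (ℝ × V) where
  toFun w := (ω x.2 w.2, 0)
  map_add' a b := by simp [Prod.ext_iff]
  map_smul' r a := by simp [Prod.ext_iff]

/-- The exponential `e^{ad x}` on the Heisenberg Lie algebra, defined by the
exponential series. -/
noncomputable def heisExpAd {V : Type*} [AddCommGroup V] [Module ℝ V]
    [TopologicalSpace V] (ω : V →ₗ[ℝ] V →ₗ[ℝ] ℝ) (x : ℝ × V) (w : ℝ × V) : ℝ × V :=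
  ∑' n : ℕ, ((n.factorial : ℝ)⁻¹) • ((heisAd ω x ^ n) w)


/-!
Since `ad x` maps into the center and kills it, `e^{ad x}` is the shear `(z, v) ↦ (z + ω(x, v), v)`.
By nondegeneracy, for `v ≠ 0` these shears move `(z, v)` to every `(t, v)`, so an invariant cone
containing a point off the center contains the whole line `ℝ × {v}`. Rescaling, it contains
`(t, ε v)` for all `t` and `ε > 0`, and by closedness the whole center, contradicting pointedness.
A pointed cone inside the line `ℝ × {0}` is then `{0}` or one of its two half-lines.
-/

open Set Filter Topology

section Heisenberg

variable {V : Type*} [AddCommGroup V] [Module ℝ V] (ω : V →ₗ[ℝ] V →ₗ[ℝ] ℝ)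

lemma heisAd_apply (x w : ℝ × V) : heisAd ω x w = (ω x.2 w.2, 0) := rfl

lemma heisAd_sq (x : ℝ × V) : heisAd ω x ^ 2 = 0 := by
  ext w <;> simp [pow_two, heisAd_apply]

lemma heisExpAd_apply [TopologicalSpace V] (x w : ℝ × V) :
    heisExpAd ω x w = (w.1 + ω x.2 w.2, w.2) := by
  have hvanish : ∀ n ∉ Finset.range 2, ((n.factorial : ℝ)⁻¹) • (heisAd ω x ^ n) w = 0 := by
    intro n hn
    rw [pow_eq_zero_of_le (not_lt.1 (Finset.mem_range.not.1 hn)) (heisAd_sq ω x)]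
    simp
  rw [heisExpAd, tsum_eq_sum hvanish]
  simp [Finset.sum_range_succ, heisAd_apply, Prod.ext_iff]

variable [TopologicalSpace V] {ω}

lemma mk_mem_of_mapsTo_heisExpAd (halt : ω.IsAlt) (hnondeg : ω.SeparatingLeft) {C : Set (ℝ × V)}
    (hinv : ∀ x, MapsTo (heisExpAd ω x) C C) {p : ℝ × V} (hp : p ∈ C) (hp2 : p.2 ≠ 0) (t : ℝ) :
    (t, p.2) ∈ C := by
  obtain ⟨u, hu⟩ : ∃ u, ω p.2 u ≠ 0 := by
    by_contra! h
    exact hp2 (hnondeg p.2 h)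
  have hu' : ω u p.2 ≠ 0 := halt.eq_iff.not.1 hu
  have hshear := hinv (0, ((t - p.1) / ω u p.2) • u) hp
  rwa [heisExpAd_apply, map_smul, LinearMap.smul_apply, smul_eq_mul, div_mul_cancel₀ _ hu',
    add_sub_cancel] at hshear

end Heisenberg

lemma mk_zero_mem_of_forall_mk_mem {E : Type*} [AddCommGroup E] [Module ℝ E] [TopologicalSpace E]
    [ContinuousSMul ℝ E] {C : Set (ℝ × E)} (hCcl : IsClosed C)
    (hCcone : ∀ r : ℝ, 0 ≤ r → ∀ x ∈ C, r • x ∈ C) {v : E} (hv : ∀ t : ℝ, (t, v) ∈ C) (a : ℝ) :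
    (a, (0 : E)) ∈ C := by
  have hlim : Tendsto (fun ε : ℝ => (a, ε • v)) (𝓝[>] 0) (𝓝 (a, 0)) := by
    refine tendsto_const_nhds.prodMk_nhds ?_
    have hsmul : Tendsto (fun ε : ℝ => ε • v) (𝓝 0) (𝓝 0) := by
      simpa using (tendsto_id (x := 𝓝 (0 : ℝ))).smul_const v
    exact hsmul.mono_left nhdsWithin_le_nhds
  refine hCcl.mem_of_tendsto hlim (eventually_nhdsWithin_of_forall fun ε (hε : 0 < ε) => ?_)
  have hscaled := hCcone ε hε.le _ (hv (a / ε))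
  rwa [Prod.smul_mk, smul_eq_mul, mul_div_cancel₀ _ hε.ne'] at hscaled

section Pointed

variable {G : Type*} [AddGroup G] {C : Set G}

lemma zero_mem_of_inter_neg_eq (hpt : C ∩ -C = {0}) : (0 : G) ∈ C :=
  (hpt.symm ▸ mem_singleton 0 : (0 : G) ∈ C ∩ -C).1

lemma eq_zero_of_mem_of_neg_mem (hpt : C ∩ -C = {0}) {x : G} (hx : x ∈ C) (hnx : -x ∈ C) :
    x = 0 :=
  (hpt ▸ ⟨hx, hnx⟩ : x ∈ ({0} : Set G))

end Pointed

lemma Real.cone_eq_zero_or_Ici_or_Iic {S : Set ℝ} (hcone : ∀ r : ℝ, 0 ≤ r → ∀ x ∈ S, r * x ∈ S)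
    (hpt : S ∩ -S = {0}) : S = {0} ∨ S = Ici 0 ∨ S = Iic 0 := by
  have hray : ∀ x ∈ S, ∀ s, 0 ≤ s / x → x ≠ 0 → s ∈ S := fun x hx s hs hx0 => by
    simpa [div_mul_cancel₀ _ hx0] using hcone _ hs x hx
  have hpos : ∀ x ∈ S, 0 < x → 1 ∈ S := fun x hx h => hray x hx 1 (by positivity) h.ne'
  have hneg : ∀ x ∈ S, x < 0 → -1 ∈ S := fun x hx h =>
    hray x hx (-1) (div_nonneg_of_nonpos (by norm_num) h.le) h.ne
  have hnot : ¬ (1 ∈ S ∧ -1 ∈ S) := fun ⟨h1, h2⟩ =>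
    one_ne_zero (eq_zero_of_mem_of_neg_mem hpt h1 h2)
  by_cases h1 : (1 : ℝ) ∈ S
  · refine Or.inr (Or.inl (Subset.antisymm (fun x hx => ?_) fun x hx => ?_))
    · exact not_lt.1 fun h => hnot ⟨h1, hneg x hx h⟩
    · rcases (mem_Ici.1 hx).eq_or_lt with rfl | h
      · exact zero_mem_of_inter_neg_eq hpt
      · exact hray 1 h1 x (by simpa using h.le) one_ne_zero
  by_cases h2 : (-1 : ℝ) ∈ S
  · refine Or.inr (Or.inr (Subset.antisymm (fun x hx => ?_) fun x hx => ?_))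
    · exact not_lt.1 fun h => h1 (hpos x hx h)
    · rcases (mem_Iic.1 hx).eq_or_lt with rfl | h
      · exact zero_mem_of_inter_neg_eq hpt
      · exact hray (-1) h2 x (div_nonneg_of_nonpos h.le (by norm_num)) (by norm_num)
  refine Or.inl (Subset.antisymm (fun x hx => ?_) (by simpa using zero_mem_of_inter_neg_eq hpt))
  rcases lt_trichotomy x 0 with h | h | h
  · exact absurd (hneg x hx h) h2
  · exact h
  · exact absurd (hpos x hx h) h1

lemma eq_zero_or_ray_of_subset_axis {E : Type*} [AddCommGroup E] [Module ℝ E] {C : Set (ℝ × E)}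
    (hcone : ∀ r : ℝ, 0 ≤ r → ∀ x ∈ C, r • x ∈ C) (hpt : C ∩ -C = {0})
    (haxis : C ⊆ {p : ℝ × E | p.2 = 0}) :
    C = {0} ∨ C = {p : ℝ × E | ∃ r : ℝ, 0 ≤ r ∧ p = (r, 0)} ∨
      C = {p : ℝ × E | ∃ r : ℝ, r ≤ 0 ∧ p = (r, 0)} := by
  set S := {r : ℝ | (r, (0 : E)) ∈ C}
  have hmem : ∀ p, p ∈ C ↔ p.2 = 0 ∧ p.1 ∈ S := fun p =>
    ⟨fun hp => ⟨haxis hp, show (p.1, (0 : E)) ∈ C by rwa [← (haxis hp : p.2 = 0)]⟩,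
      fun ⟨h2, h1⟩ => by obtain ⟨a, v⟩ := p; subst h2; exact h1⟩
  have hScone : ∀ r : ℝ, 0 ≤ r → ∀ x ∈ S, r * x ∈ S := fun r hr x hx => by
    simpa [S] using hcone r hr _ hx
  have hSpt : S ∩ -S = {0} := by
    ext x
    simpa [S, Prod.ext_iff] using Set.ext_iff.1 hpt (x, 0)
  rcases Real.cone_eq_zero_or_Ici_or_Iic hScone hSpt with h | h | h
  · exact Or.inl (ext fun p => by simp [hmem, h, Prod.ext_iff, and_comm])
  all_goals refine Or.inr ?_
  · exact Or.inl (ext fun p => by simp [hmem, h, Prod.ext_iff, and_comm])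
  · exact Or.inr (ext fun p => by simp [hmem, h, Prod.ext_iff, and_comm])

theorem statement18_general {V : Type*} [NormedAddCommGroup V] [NormedSpace ℝ V]
    (ω : V →ₗ[ℝ] V →ₗ[ℝ] ℝ)
    (halt : ∀ v : V, ω v v = 0)
    (hnondeg : ∀ v : V, (∀ w : V, ω v w = 0) → v = 0)
    (C : Set (ℝ × V)) (hCcl : IsClosed C)
    (hCcone : ∀ r : ℝ, 0 ≤ r → ∀ x ∈ C, r • x ∈ C)
    (hCpt : C ∩ (-C) = {0})
    (hCinv : ∀ x : ℝ × V, heisExpAd ω x '' C = C) :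
    C ⊆ {p : ℝ × V | p.2 = 0} ∧
      (C = {0} ∨ C = {p : ℝ × V | ∃ r : ℝ, 0 ≤ r ∧ p = (r, 0)} ∨
        C = {p : ℝ × V | ∃ r : ℝ, r ≤ 0 ∧ p = (r, 0)}) := by
  have hinv : ∀ x, MapsTo (heisExpAd ω x) C C := fun x => mapsTo_iff_image_subset.2 (hCinv x).subset
  have hcenter : C ⊆ {p : ℝ × V | p.2 = 0} := fun p hp => by_contra fun hp2 => by
    have hline := mk_zero_mem_of_forall_mk_mem hCcl hCcone
      (mk_mem_of_mapsTo_heisExpAd halt hnondeg hinv hp hp2)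
    exact one_ne_zero (congrArg Prod.fst (eq_zero_of_mem_of_neg_mem hCpt (hline 1) (by
      simpa using hline (-1))))
  exact ⟨hcenter, eq_zero_or_ray_of_subset_axis hCcone hCpt hcenter⟩

/-- let `(V,ω)` be a finite-dimensional real symplectic vector space and
`heis(V,ω) = ℝ ⊕ V` the Heisenberg Lie algebra with bracket
`[(z,v),(z′,v′)] = (ω(v,v′),0)`. Every pointed invariant cone `C` in `heis(V,ω)` is
contained in the center `ℝ ⊕ {0}`; hence, up to sign, the only nonzero pointed
invariant cone of this form spanning the center is `ℝ₊·(1,0)`. -/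
theorem statement18 {V : Type*} [NormedAddCommGroup V] [NormedSpace ℝ V]
    [FiniteDimensional ℝ V]
    (ω : V →ₗ[ℝ] V →ₗ[ℝ] ℝ)
    (halt : ∀ v : V, ω v v = 0)
    (hnondeg : ∀ v : V, (∀ w : V, ω v w = 0) → v = 0)
    (C : Set (ℝ × V)) (hCcl : IsClosed C) (hCcv : Convex ℝ C)
    (hCcone : ∀ r : ℝ, 0 ≤ r → ∀ x ∈ C, r • x ∈ C)
    (hCpt : C ∩ (-C) = {0})
    (hCinv : ∀ x : ℝ × V, heisExpAd ω x '' C = C) :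
    C ⊆ {p : ℝ × V | p.2 = 0} ∧
      (C = {0} ∨ C = {p : ℝ × V | ∃ r : ℝ, 0 ≤ r ∧ p = (r, 0)} ∨
        C = {p : ℝ × V | ∃ r : ℝ, r ≤ 0 ∧ p = (r, 0)}) :=
  statement18_general ω halt hnondeg C hCcl hCcone hCpt hCinv
end
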